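/- arXiv:math/0303362 — 3 statements merged into one kernel-verified Lean document; each statement's English description precedes it below -/
import Mathlib

section
/- For all integers m, n, p with m + n + p = 0, the identity [p+1][p][p−1][m−n] + [m+1][m][m−1][n−p] + [n+1][n][n−1][p−m] = 0 holds. -/
/-!
Put `a = q ^ m`, `b = q ^ n`, `c = q ^ p`, so that `a * b * c = 1`. Every q-integer in the identity
is `(u - u⁻¹) / (q - q⁻¹)` for a monomial `u` in `q, a, b, c`, so after clearing the common
denominator `(q - q⁻¹) ^ 4` the identity is one between Laurent polynomials in `q, a, b`, valid in
any field.
-/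

/-- The q-integer `[m] = (q^m - q^(-m))/(q - q⁻¹)`. -/
noncomputable def qInt (q : ℂ) (m : ℤ) : ℂ := (q ^ m - q ^ (-m)) / (q - q⁻¹)

theorem cyclic_sum_sub_inv_eq_zero_of_mul_eq_one {K : Type*} [Field K] (x : K) {a b c : K}
    (habc : a * b * c = 1) :
    (c * x - (c * x)⁻¹) * (c - c⁻¹) * (c * x⁻¹ - (c * x⁻¹)⁻¹) * (a / b - (a / b)⁻¹)
      + (a * x - (a * x)⁻¹) * (a - a⁻¹) * (a * x⁻¹ - (a * x⁻¹)⁻¹) * (b / c - (b / c)⁻¹)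
      + (b * x - (b * x)⁻¹) * (b - b⁻¹) * (b * x⁻¹ - (b * x⁻¹)⁻¹) * (c / a - (c / a)⁻¹) = 0 := by
  rcases eq_or_ne x 0 with rfl | hx
  · simp
  have ha : a ≠ 0 := left_ne_zero_of_mul (left_ne_zero_of_mul_eq_one habc)
  have hb : b ≠ 0 := right_ne_zero_of_mul (left_ne_zero_of_mul_eq_one habc)
  obtain rfl : c = (a * b)⁻¹ := eq_inv_of_mul_eq_one_right habc
  field_simp
  ring

theorem qInt_cubic_cyclic_identity_general (q : ℂ)
    (m n p : ℤ) (h : m + n + p = 0) :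
    qInt q (p + 1) * qInt q p * qInt q (p - 1) * qInt q (m - n)
      + qInt q (m + 1) * qInt q m * qInt q (m - 1) * qInt q (n - p)
      + qInt q (n + 1) * qInt q n * qInt q (n - 1) * qInt q (p - m) = 0 := by
  rcases eq_or_ne q 0 with rfl | hq
  · simp [qInt]
  have habc : q ^ m * q ^ n * q ^ p = 1 := by
    rw [← zpow_add₀ hq, ← zpow_add₀ hq, h, zpow_zero]
  simp only [qInt, zpow_neg, zpow_add_one₀ hq, zpow_sub_one₀ hq, zpow_sub₀ hq, div_mul_div_comm,
    ← add_div, cyclic_sum_sub_inv_eq_zero_of_mul_eq_one q habc, zero_div]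

/-- For all integers `m, n, p` with `m + n + p = 0`:
`[p+1][p][p−1][m−n] + [m+1][m][m−1][n−p] + [n+1][n][n−1][p−m] = 0`. -/
theorem qInt_cubic_cyclic_identity (q : ℂ) (hq : q ≠ 0) (hq2 : q ^ 2 ≠ 1)
    (m n p : ℤ) (h : m + n + p = 0) :
    qInt q (p + 1) * qInt q p * qInt q (p - 1) * qInt q (m - n)
      + qInt q (m + 1) * qInt q m * qInt q (m - 1) * qInt q (n - p)
      + qInt q (n + 1) * qInt q n * qInt q (n - 1) * qInt q (p - m) = 0 :=
  qInt_cubic_cyclic_identity_general q m n p h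
end

section
/- For all integers m and n, the identity [m+1][m][m−1][2n+m] − [m+n−1][m+n][m+n+1][m−n] − [n+1][n][n−1][n+2m] = 0 holds. -/
theorem sub_inv_three_variable_identity {K : Type*} [Field K] {a b x : K}
    (ha : a ≠ 0) (hb : b ≠ 0) (hx : x ≠ 0) :
    (a * x - (a * x)⁻¹) * (a - a⁻¹) * (a / x - (a / x)⁻¹) * (b * b * a - (b * b * a)⁻¹)
      - (a * b / x - (a * b / x)⁻¹) * (a * b - (a * b)⁻¹) * (a * b * x - (a * b * x)⁻¹)
        * (a / b - (a / b)⁻¹)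
      - (b * x - (b * x)⁻¹) * (b - b⁻¹) * (b / x - (b / x)⁻¹) * (b * a * a - (b * a * a)⁻¹)
      = 0 := by
  field_simp
  ring

theorem qInt_eq_mul_inv (q : ℂ) (k : ℤ) : qInt q k = (q ^ k - (q ^ k)⁻¹) * (q - q⁻¹)⁻¹ := by
  rw [qInt, zpow_neg, div_eq_mul_inv]

theorem qInt_two_variable_identity_general (q : ℂ) (hq : q ≠ 0) (m n : ℤ) :
    qInt q (m + 1) * qInt q m * qInt q (m - 1) * qInt q (2 * n + m)
      - qInt q (m + n - 1) * qInt q (m + n) * qInt q (m + n + 1) * qInt q (m - n)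
      - qInt q (n + 1) * qInt q n * qInt q (n - 1) * qInt q (n + 2 * m) = 0 := by
  have key := sub_inv_three_variable_identity (zpow_ne_zero m hq) (zpow_ne_zero n hq) hq
  simp only [qInt_eq_mul_inv, two_mul, zpow_add₀ hq, zpow_sub₀ hq, zpow_one]
  linear_combination (q - q⁻¹)⁻¹ ^ 4 * key

/-- For all integers `m` and `n`:
`[m+1][m][m−1][2n+m] − [m+n−1][m+n][m+n+1][m−n] − [n+1][n][n−1][n+2m] = 0`. -/
theorem qInt_two_variable_identity (q : ℂ) (hq : q ≠ 0) (hq2 : q ^ 2 ≠ 1) (m n : ℤ) :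
    qInt q (m + 1) * qInt q m * qInt q (m - 1) * qInt q (2 * n + m)
      - qInt q (m + n - 1) * qInt q (m + n) * qInt q (m + n + 1) * qInt q (m - n)
      - qInt q (n + 1) * qInt q n * qInt q (n - 1) * qInt q (n + 2 * m) = 0 :=
  qInt_two_variable_identity_general q hq m n
end

section
/- Define, for each integer n, the ℂ-linear operator ℓ_n = −z^{n+1}∂_q τ on ℂ[z, z^{−1}], i.e., ℓ_n(z^k) = −q^k[k]·z^{n+k} for all k ∈ ℤ. Then for all integers m and n, the q-bracket relation q^{m−n}·ℓ_m∘ℓ_n − q^{n−m}·ℓ_n∘ℓ_m = [m−n]·ℓ_{m+n} holds as an identity of linear operators on ℂ[z, z^{−1}]. -/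
/-- The operator `ℓ_n = −z^{n+1}∂_q τ` on `ℂ[z,z⁻¹]`, i.e. the `ℂ`-linear map with
`ℓ_n(z^k) = −q^k·[k]·z^{n+k}` for all `k ∈ ℤ`. -/
noncomputable def ell (q : ℂ) (n : ℤ) : LaurentPolynomial ℂ →ₗ[ℂ] LaurentPolynomial ℂ :=
  (AddMonoidAlgebra.coeffLinearEquiv ℂ).symm.toLinearMap ∘ₗ
    (Finsupp.lsum ℂ fun k => (-(q ^ k * qInt q k)) • Finsupp.lsingle (n + k)) ∘ₗ
      (AddMonoidAlgebra.coeffLinearEquiv ℂ).toLinearMap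

theorem qInt_sub {q : ℂ} (hq : q ≠ 0) (a b : ℤ) :
    qInt q (a - b) = q ^ b * qInt q a - q ^ a * qInt q b := by
  have hnum : q ^ b * (q ^ a - q ^ (-a)) - q ^ a * (q ^ b - q ^ (-b))
      = q ^ (a - b) - q ^ (-(a - b)) := by
    simp only [mul_sub, ← zpow_add₀ hq]
    ring_nf
  rw [qInt, qInt, qInt, mul_div_assoc', mul_div_assoc', ← sub_div, hnum]

theorem ell_single (q : ℂ) (n k : ℤ) (a : ℂ) :
    ell q n (AddMonoidAlgebra.single k a)
      = (-(q ^ k * qInt q k)) • AddMonoidAlgebra.single (n + k) a := by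
  simp only [ell, LinearMap.comp_apply, LinearEquiv.coe_coe,
    AddMonoidAlgebra.coeffLinearEquiv_apply, AddMonoidAlgebra.coeff_single, Finsupp.lsum_single]
  rfl

theorem ell_qBracket_general (q : ℂ) (hq : q ≠ 0) (m n : ℤ) :
    q ^ (m - n) • (ell q m ∘ₗ ell q n) - q ^ (n - m) • (ell q n ∘ₗ ell q m)
      = qInt q (m - n) • ell q (m + n) := by
  ext k : 2
  simp only [LinearMap.comp_apply, AddMonoidAlgebra.lsingle_apply, LinearMap.sub_apply,
    LinearMap.smul_apply, ell_single, map_smul, smul_smul, ← add_assoc, add_comm n m, ← sub_smul]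
  refine congrArg (· • _) ?_
  have hm : q ^ (m - n) * q ^ (n + k) = q ^ (m + k) := by rw [← zpow_add₀ hq]; ring_nf
  have hn : q ^ (n - m) * q ^ (m + k) = q ^ (n + k) := by rw [← zpow_add₀ hq]; ring_nf
  have hbracket := qInt_sub hq (m + k) (n + k)
  rw [add_sub_add_right_eq_sub] at hbracket
  linear_combination (q ^ k * qInt q k) *
    (qInt q (n + k) * hm - qInt q (m + k) * hn + hbracket)

/-- The q-bracket relation `q^{m−n}·ℓ_m∘ℓ_n − q^{n−m}·ℓ_n∘ℓ_m = [m−n]·ℓ_{m+n}`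
as an identity of linear operators on `ℂ[z,z⁻¹]`. -/
theorem ell_qBracket (q : ℂ) (hq : q ≠ 0) (hq2 : q ^ 2 ≠ 1) (m n : ℤ) :
    q ^ (m - n) • (ell q m ∘ₗ ell q n) - q ^ (n - m) • (ell q n ∘ₗ ell q m)
      = qInt q (m - n) • ell q (m + n) :=
  ell_qBracket_general q hq m n
end
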